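/- arXiv:1404.4415 — 2 statements merged into one kernel-verified Lean document; each statement's English description precedes it below -/
import Mathlib

section
/- Let λ ∈ 𝒫^l_n, let t ∈ Std(λ) and let 2 ≤ j ≤ n. Then j−1 ⇙_t j (that is, either j−1 and j lie in the same component of t with j strictly lower and strictly to the left of j−1, or j−1 lies in a component with strictly smaller index than the component containing j) if and only if w_t has a reduced expression beginning with s_{j−1}. -/
/-!
The permutation `w_t⁻¹` sends the entry `t(A)` back to `t_λ(A)`. The Coxeter length of a
permutation of `{1,…,n}` is its number of inversions, so `s_{j-1}` begins a reduced expression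
of `w` exactly when `j - 1` is a left descent, `w⁻¹ j < w⁻¹ (j - 1)`. The theorem thus says that
`j - 1 ⇙_t j` holds exactly when the node of `j` comes before the node of `j - 1` in the column
reading order defining `t_λ`; for a standard tableau, the relative positions that would make
these two conditions differ are excluded because `t` increases along rows and columns.
-/

namespace FS

open scoped Classical

/-- A node `(r, c, m)`: row `r`, column `c`, component `m` (all 1-based). -/
abbrev Node := ℕ × ℕ × ℕ

/-- Membership of a node in the Young diagram of the multipartition `p`,
where `p m r` is the `r`-th part of the `m`-th component. -/
def InDiag (p : ℕ → ℕ → ℕ) (A : Node) : Prop :=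
  1 ≤ A.2.1 ∧ A.2.1 ≤ p A.2.2 A.1

/-- `p` is an `l`-multipartition of `n` (components indexed `1,…,l`, rows indexed `1,…`). -/
def IsMP (l n : ℕ) (p : ℕ → ℕ → ℕ) : Prop :=
  (∀ m r, (m = 0 ∨ l < m ∨ r = 0 ∨ n < r) → p m r = 0) ∧
  (∀ m r, 1 ≤ r → p m (r + 1) ≤ p m r) ∧
  (∑ m ∈ Finset.Icc 1 l, ∑ r ∈ Finset.Icc 1 n, p m r) = n

/-- Total size of an `l`-multicomposition (rows bounded by `n`). -/
def mpSize (l n : ℕ) (p : ℕ → ℕ → ℕ) : ℕ :=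
  ∑ m ∈ Finset.Icc 1 l, ∑ r ∈ Finset.Icc 1 n, p m r

/-- Size of the `m`-th component. -/
def compSize (n : ℕ) (p : ℕ → ℕ → ℕ) (m : ℕ) : ℕ :=
  ∑ r ∈ Finset.Icc 1 n, p m r

/-- Length of column `c` of component `m`, i.e. `(p^(m))'_c`. -/
def colLen (n : ℕ) (p : ℕ → ℕ → ℕ) (m c : ℕ) : ℕ :=
  ((Finset.Icc 1 n).filter fun r => c ≤ p m r).card

/-- Dominance order on `l`-multicompositions: `Dom l N p q` means `p ⊵ q`. -/
def Dom (l N : ℕ) (p q : ℕ → ℕ → ℕ) : Prop :=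
  ∀ m r, 1 ≤ m → m ≤ l →
    (∑ m' ∈ Finset.Icc 1 (m - 1), compSize N q m') + ∑ r' ∈ Finset.Icc 1 r, q m r' ≤
      (∑ m' ∈ Finset.Icc 1 (m - 1), compSize N p m') + ∑ r' ∈ Finset.Icc 1 r, p m r'

/-- `t` is a `p`-tableau: a bijection from the diagram of `p` onto `{1,…,n}`. -/
def IsTab (n : ℕ) (p : ℕ → ℕ → ℕ) (t : Node → ℕ) : Prop :=
  (∀ A, InDiag p A → 1 ≤ t A ∧ t A ≤ n) ∧
  (∀ A B, InDiag p A → InDiag p B → t A = t B → A = B) ∧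
  (∀ i, 1 ≤ i → i ≤ n → ∃ A, InDiag p A ∧ t A = i)

/-- Entries increase from left to right along each row. -/
def RowStrict (p : ℕ → ℕ → ℕ) (t : Node → ℕ) : Prop :=
  ∀ r c m, InDiag p (r, c, m) → InDiag p (r, c + 1, m) → t (r, c, m) < t (r, c + 1, m)

/-- Entries increase down each column. -/
def ColStrict (p : ℕ → ℕ → ℕ) (t : Node → ℕ) : Prop :=
  ∀ r c m, InDiag p (r, c, m) → InDiag p (r + 1, c, m) → t (r, c, m) < t (r + 1, c, m)

/-- A standard tableau is both row-strict and column-strict. -/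
def IsStd (p : ℕ → ℕ → ℕ) (t : Node → ℕ) : Prop := RowStrict p t ∧ ColStrict p t

/-- The tableau `t_λ`, obtained by writing `1,…,n` in order down successive columns
from left to right (components from `l` down to `1`). -/
def colTab (l n : ℕ) (p : ℕ → ℕ → ℕ) : Node → ℕ := fun A =>
  (∑ m' ∈ Finset.Icc (A.2.2 + 1) l, compSize n p m') +
    (∑ c' ∈ Finset.Icc 1 (A.2.1 - 1), colLen n p A.2.2 c') + A.1

/-- The tableau `t^λ`, obtained by writing `1,…,n` in order along successive rows
from top to bottom (components from `1` up to `l`). -/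
def rowTab (n : ℕ) (p : ℕ → ℕ → ℕ) : Node → ℕ := fun A =>
  (∑ m' ∈ Finset.Icc 1 (A.2.2 - 1), compSize n p m') +
    (∑ r' ∈ Finset.Icc 1 (A.1 - 1), p A.2.2 r') + A.2.1

/-- The Coxeter generator `s_i = (i, i+1)` of the symmetric group. -/
def sw (i : ℕ) : Equiv.Perm ℕ := Equiv.swap i (i + 1)

/-- The product `s_{i_1} ⋯ s_{i_k}` corresponding to a word `L = [i_1,…,i_k]`. -/
def wordProd (L : List ℕ) : Equiv.Perm ℕ := (L.map sw).prod

/-- `L` is an expression for `w` in the Coxeter generators `s_1,…,s_{n-1}` of `S_n`. -/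
def IsWord (n : ℕ) (L : List ℕ) (w : Equiv.Perm ℕ) : Prop :=
  (∀ i ∈ L, 1 ≤ i ∧ i + 1 ≤ n) ∧ wordProd L = w

/-- The Coxeter length of `w ∈ S_n`. -/
noncomputable def len (n : ℕ) (w : Equiv.Perm ℕ) : ℕ :=
  sInf {k | ∃ L, IsWord n L w ∧ L.length = k}

/-- `L` is a reduced expression for `w ∈ S_n`. -/
def IsReduced (n : ℕ) (L : List ℕ) (w : Equiv.Perm ℕ) : Prop :=
  IsWord n L w ∧ L.length = len n w

/-- The Bruhat order on `S_n`: `x ≤ w` iff some reduced expression for `w` has an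
expression for `x` as a subsequence. -/
def BruhatLE (n : ℕ) (x w : Equiv.Perm ℕ) : Prop :=
  ∃ L, IsReduced n L w ∧ ∃ L', L'.Sublist L ∧ wordProd L' = x

/-- Strict Bruhat order. -/
def BruhatLT (n : ℕ) (x w : Equiv.Perm ℕ) : Prop := BruhatLE n x w ∧ x ≠ w

/-- The left (weak) order on `S_n`: `x ≤_L w` iff `ℓ(w) = ℓ(w x⁻¹) + ℓ(x)`. -/
def LeftLE (n : ℕ) (x w : Equiv.Perm ℕ) : Prop :=
  len n w = len n (w * x⁻¹) + len n x

/-- `w` is a permutation of `{1,…,n}` (fixing everything else). -/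
def PermOf (n : ℕ) (w : Equiv.Perm ℕ) : Prop := ∀ i, i = 0 ∨ n < i → w i = i

/-- `w` is the permutation sending the base tableau `base` to the tableau `t`
(e.g. `w = w_t` when `base = t_λ`). -/
def IsPermOfTab (n : ℕ) (p : ℕ → ℕ → ℕ) (base t : Node → ℕ) (w : Equiv.Perm ℕ) : Prop :=
  PermOf n w ∧ ∀ A, InDiag p A → w (base A) = t A

/-- `Shape(t↓j)`: the multicomposition whose `(m, r)` entry is the number of nodes in
row `r` of component `m` whose entry under `t` is at most `j`. -/
def shape (n : ℕ) (p : ℕ → ℕ → ℕ) (t : Node → ℕ) (j : ℕ) : ℕ → ℕ → ℕ :=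
  fun m r => ((Finset.Icc 1 n).filter fun c => c ≤ p m r ∧ t (r, c, m) ≤ j).card

/-- `Shape(t↓j)'`: the conjugate multicomposition, whose `(m, c)` entry is the number of
nodes in column `c` of component `l + 1 - m` whose entry under `t` is at most `j`. -/
def shapeConj (l n : ℕ) (p : ℕ → ℕ → ℕ) (t : Node → ℕ) (j : ℕ) : ℕ → ℕ → ℕ :=
  fun m c => ((Finset.Icc 1 n).filter fun r => c ≤ p (l + 1 - m) r ∧ t (r, c, l + 1 - m) ≤ j).card

/-- `A` lies weakly to the left of `B`. -/
def WeaklyLeft (A B : Node) : Prop :=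
  B.2.2 < A.2.2 ∨ (A.2.2 = B.2.2 ∧ A.2.1 ≤ B.2.1)

/-- `A` lies weakly above `B`. -/
def WeaklyAbove (A B : Node) : Prop :=
  A.2.2 < B.2.2 ∨ (A.2.2 = B.2.2 ∧ A.1 ≤ B.1)

/-- `A` lies weakly to the right of `B`. -/
def WeaklyRight (A B : Node) : Prop :=
  A.2.2 < B.2.2 ∨ (A.2.2 = B.2.2 ∧ B.2.1 ≤ A.2.1)

/-- `t` (a `mu`-tableau) is `lam`-column-dominated on `1,…,j`: each `i ≤ j` appears in `t`
at least as far to the left as it does in `t_lam`. -/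
def ColDomOn (l n : ℕ) (lam mu : ℕ → ℕ → ℕ) (t : Node → ℕ) (j : ℕ) : Prop :=
  ∀ i A B, 1 ≤ i → i ≤ j → InDiag mu A → t A = i → InDiag lam B →
    colTab l n lam B = i → WeaklyLeft A B

/-- `t` is weakly `lam`-column-dominated on `1,…,j`: each `i ≤ j` appears in `t` in a
component at least as far to the left as it does in `t_lam`. -/
def WColDomOn (l n : ℕ) (lam mu : ℕ → ℕ → ℕ) (t : Node → ℕ) (j : ℕ) : Prop :=
  ∀ i A B, 1 ≤ i → i ≤ j → InDiag mu A → t A = i → InDiag lam B →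
    colTab l n lam B = i → B.2.2 ≤ A.2.2

/-- `t` (a `mu`-tableau) is `lam`-row-dominated on `1,…,j`: each `i ≤ j` appears in `t`
at least as high as it does in `t^lam`. -/
def RowDomOn (n : ℕ) (lam mu : ℕ → ℕ → ℕ) (t : Node → ℕ) (j : ℕ) : Prop :=
  ∀ i A B, 1 ≤ i → i ≤ j → InDiag mu A → t A = i → InDiag lam B →
    rowTab n lam B = i → WeaklyAbove A B

/-- The multipartition `λ_L(c, m)`: the first `c` columns of component `m`, followed by
components `m+1,…,l`. -/
def leftPart (lam : ℕ → ℕ → ℕ) (c m : ℕ) : ℕ → ℕ → ℕ := fun k r =>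
  if k = 0 then 0 else if k = 1 then min (lam m r) c else lam (m + k - 1) r

/-- The multipartition `λ_R(c, m)`: components `1,…,m-1`, followed by the part of
component `m` after its first `c` columns. -/
def rightPart (lam : ℕ → ℕ → ℕ) (c m : ℕ) : ℕ → ℕ → ℕ := fun k r =>
  if k < m then lam k r else if k = m then lam m r - c else 0

/-- The multipartition `λ_T(r₀, m)`: components `1,…,m-1`, followed by the first `r₀`
rows of component `m`. -/
def topPart (lam : ℕ → ℕ → ℕ) (r₀ m : ℕ) : ℕ → ℕ → ℕ := fun k r =>
  if k < m then lam k r else if k = m then (if r ≤ r₀ then lam m r else 0) else 0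

/-- The multipartition `λ_B(r₀, m)`: the rows of component `m` after row `r₀`, followed
by components `m+1,…,l`. -/
def botPart (lam : ℕ → ℕ → ℕ) (r₀ m : ℕ) : ℕ → ℕ → ℕ := fun k r =>
  if k = 0 ∨ r = 0 then 0 else if k = 1 then lam m (r₀ + r) else lam (m + k - 1) r

/-- The glued tableau `t_L # t_R`: places `1,…,n_L` on the left part as in `t_L`, and
places `n_L + t_R(A)` at the node corresponding to each node `A` of the right part. -/
def glueLR (nL c m : ℕ) (tL tR : Node → ℕ) : Node → ℕ := fun A =>
  if A.2.2 < m then nL + tR A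
  else if A.2.2 = m then
    (if A.2.1 ≤ c then tL (A.1, A.2.1, 1) else nL + tR (A.1, A.2.1 - c, m))
  else tL (A.1, A.2.1, A.2.2 - m + 1)

/-- The tableau `t⁺` obtained from a tableau `t` of `μ_R(1,m)` by increasing all entries
by `k`, adjoining a first column with entries `1,…,k` to component `m`, and adjoining
empty components `m+1,…,l`. -/
def addFirstCol (k m : ℕ) (t : Node → ℕ) : Node → ℕ := fun A =>
  if A.2.2 = m then (if A.2.1 = 1 then A.1 else k + t (A.1, A.2.1 - 1, m))
  else k + t A

/-- The tableau `t⁺` obtained from a tableau `t` of `μ_L(d-1,m)` by adjoining empty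
components `1,…,m-1` and adjoining a column `d` to component `m` with entries
`nk+1,…,nk+k` from top to bottom. -/
def addLastCol (nk m d : ℕ) (t : Node → ℕ) : Node → ℕ := fun A =>
  if A.2.2 = m then (if A.2.1 = d then nk + A.1 else t (A.1, A.2.1, 1))
  else t (A.1, A.2.1, A.2.2 - m + 1)

/-- The `i`-th smallest element of a finite set of naturals (1-based). -/
def nthElt (S : Finset ℕ) (i : ℕ) : ℕ := (S.sort (· ≤ ·)).getD (i - 1) 0

/-- The set `S_B` of entries of `t_λ` lying in the bottom region (component `> m`, or
component `m` in a row `> r₀`). -/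
noncomputable def SB (l n : ℕ) (lam : ℕ → ℕ → ℕ) (r₀ m : ℕ) : Finset ℕ :=
  (Finset.Icc 1 n).filter fun i =>
    ∃ A, InDiag lam A ∧ colTab l n lam A = i ∧ (m < A.2.2 ∨ (A.2.2 = m ∧ r₀ < A.1))

/-- The glued tableau `t #̄ s`: on the bottom region the entries are `lab_B ∘ t` and on
the top region they are `lab_T ∘ s`, where `lab_B`, `lab_T` are the order-preserving
bijections onto `S_B`, `S_T`. -/
def glueBT (S_B S_T : Finset ℕ) (r₀ m : ℕ) (tB tT : Node → ℕ) : Node → ℕ := fun A =>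
  if A.2.2 < m then nthElt S_T (tT A)
  else if A.2.2 = m then
    (if A.1 ≤ r₀ then nthElt S_T (tT A) else nthElt S_B (tB (A.1 - r₀, A.2.1, 1)))
  else nthElt S_B (tB (A.1, A.2.1, A.2.2 - m + 1))

/-- The residue of a node `(r, c, m)` with respect to the multicharge `κ`:
`κ_m + c - r` in `ℤ/eℤ` (with `ZMod 0 = ℤ` encoding `e = ∞`). -/
def resNode (e : ℕ) (κ : ℕ → ZMod e) (A : Node) : ZMod e :=
  κ A.2.2 + (A.2.1 : ZMod e) - (A.1 : ZMod e)

noncomputable def invCount (n : ℕ) (w : Equiv.Perm ℕ) : ℕ :=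
  ({p ∈ Finset.Icc 1 n ×ˢ Finset.Icc 1 n | p.1 < p.2 ∧ w p.2 < w p.1} : Finset (ℕ × ℕ)).card

lemma sw_lt_sw_iff (i u v : ℕ) :
    sw i v < sw i u ↔ (v < u ∧ ¬(v = i ∧ u = i + 1)) ∨ (u = i ∧ v = i + 1) := by
  simp only [sw, Equiv.swap_apply_def]
  split_ifs <;> omega

lemma sw_mul_self (i : ℕ) : sw i * sw i = 1 := Equiv.swap_mul_self _ _

lemma wordProd_cons (a : ℕ) (L : List ℕ) : wordProd (a :: L) = sw a * wordProd L := by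
  simp [wordProd]

namespace PermOf

variable {n : ℕ} {w : Equiv.Perm ℕ}

lemma mem_Icc_iff (hw : PermOf n w) {x : ℕ} : (1 ≤ w x ∧ w x ≤ n) ↔ (1 ≤ x ∧ x ≤ n) := by
  constructor <;> intro h <;> by_contra hx
  · have hfix := hw x (by omega)
    omega
  · have hfix : w (w x) = w x := hw _ (by omega)
    have := w.injective hfix
    omega

lemma inv (hw : PermOf n w) : PermOf n w⁻¹ := fun x hx =>
  Equiv.Perm.inv_eq_iff_eq.mpr (hw x hx).symm

lemma sw_mul (hw : PermOf n w) {i : ℕ} (hi : 1 ≤ i) (hin : i + 1 ≤ n) :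
    PermOf n (sw i * w) := fun x hx => by
  rw [Equiv.Perm.mul_apply, hw x hx, sw, Equiv.swap_apply_of_ne_of_ne] <;> omega

/-- Outside `{1,…,n}` the permutation is the identity, so increasing on `{1,…,n}` makes it
increasing on all of `ℕ`, and an increasing bijection of `ℕ` is the identity. -/
lemma eq_one_of_lt_succ (hw : PermOf n w) (h : ∀ i, 1 ≤ i → i + 1 ≤ n → w i < w (i + 1)) :
    w = 1 := by
  have hmono : StrictMono w := strictMono_nat_of_lt_succ fun i => by
    rcases Nat.eq_zero_or_pos i with rfl | hi
    · rw [hw 0 (Or.inl rfl)]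
      exact Nat.pos_of_ne_zero fun h0 =>
        one_ne_zero (w.injective (h0.trans (hw 0 (Or.inl rfl)).symm))
    by_cases hin : i + 1 ≤ n
    · exact h i hi hin
    · rw [hw (i + 1) (Or.inr (by omega))]
      by_cases hi' : n < i
      · rw [hw i (Or.inr hi')]; omega
      · have := (hw.mem_Icc_iff (x := i)).mpr ⟨hi, by omega⟩
        omega
  let e := hmono.orderIsoOfSurjective w w.surjective
  ext x
  have h1 : x ≤ w x := hmono.id_le x
  have h2 : w x ≤ e.symm (w x) := e.symm.strictMono.id_le (w x)
  rw [StrictMono.orderIsoOfSurjective_symm_apply_self] at h2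
  simp only [Equiv.Perm.coe_one, id_eq]
  omega

lemma exists_descent (hw : PermOf n w) (hne : w ≠ 1) :
    ∃ i, 1 ≤ i ∧ i + 1 ≤ n ∧ w⁻¹ (i + 1) < w⁻¹ i := by
  by_contra! h
  refine hne (inv_eq_one.mp (hw.inv.eq_one_of_lt_succ fun i hi hin => ?_))
  exact (h i hi hin).lt_of_ne fun he => by simpa using w⁻¹.injective he

end PermOf

lemma permOf_wordProd {n : ℕ} {L : List ℕ} (hL : ∀ i ∈ L, 1 ≤ i ∧ i + 1 ≤ n) :
    PermOf n (wordProd L) := by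
  induction L with
  | nil => exact fun _ _ => rfl
  | cons a L ih =>
    rw [wordProd_cons]
    exact (ih fun i hi => hL i (List.mem_cons_of_mem a hi)).sw_mul
      (hL a List.mem_cons_self).1 (hL a List.mem_cons_self).2

section invCount

variable {n : ℕ} {w : Equiv.Perm ℕ}

/-- The inversions of `s_i * w` are those of `w` together with `(a, b)`. -/
lemma invCount_sw_mul_of_lt (hw : PermOf n w) {i a b : ℕ} (hi : 1 ≤ i) (hin : i + 1 ≤ n)
    (ha : w a = i) (hb : w b = i + 1) (hab : a < b) :
    invCount n (sw i * w) = invCount n w + 1 := by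
  have ha' := (hw.mem_Icc_iff (x := a)).mp (by omega)
  have hb' := (hw.mem_Icc_iff (x := b)).mp (by omega)
  have hx : ∀ x, w x = i ↔ x = a := fun x => by rw [← ha, w.injective.eq_iff]
  have hy : ∀ y, w y = i + 1 ↔ y = b := fun y => by rw [← hb, w.injective.eq_iff]
  unfold invCount
  rw [← Finset.card_insert_of_notMem (a := (a, b))]
  · congr 1
    ext ⟨x, y⟩
    simp only [Finset.mem_insert, Finset.mem_filter, Finset.mem_product, Finset.mem_Icc,
      Equiv.Perm.mul_apply, sw_lt_sw_iff, hx, hy, Prod.mk.injEq]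
    constructor
    · rintro ⟨hxy, hlt, (⟨hv, -⟩ | hab')⟩
      · exact Or.inr ⟨hxy, hlt, hv⟩
      · exact Or.inl hab'
    · rintro (⟨rfl, rfl⟩ | ⟨hxy, hlt, hv⟩)
      · exact ⟨⟨ha', hb'⟩, hab, Or.inr ⟨rfl, rfl⟩⟩
      · exact ⟨hxy, hlt, Or.inl ⟨hv, fun ⟨hyb, hxa⟩ => by omega⟩⟩
  · simp only [Finset.mem_filter]
    omega

lemma invCount_eq_sw_mul_add_one (hw : PermOf n w) {i : ℕ} (hi : 1 ≤ i) (hin : i + 1 ≤ n)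
    (hdesc : w⁻¹ (i + 1) < w⁻¹ i) :
    invCount n w = invCount n (sw i * w) + 1 := by
  have h := invCount_sw_mul_of_lt (hw.sw_mul hi hin) hi hin (a := w⁻¹ (i + 1)) (b := w⁻¹ i)
    (by simp [sw]) (by simp [sw]) hdesc
  rwa [← mul_assoc, sw_mul_self, one_mul] at h

lemma invCount_sw_mul_le (hw : PermOf n w) {i : ℕ} (hi : 1 ≤ i) (hin : i + 1 ≤ n) :
    invCount n (sw i * w) ≤ invCount n w + 1 := by
  rcases lt_or_gt_of_ne (w⁻¹.injective.ne (show i ≠ i + 1 by omega)) with h | h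
  · exact (invCount_sw_mul_of_lt hw hi hin (w.apply_symm_apply i)
      (w.apply_symm_apply (i + 1)) h).le
  · have := invCount_eq_sw_mul_add_one hw hi hin h
    omega

lemma invCount_one : invCount n 1 = 0 := by
  rw [invCount, Finset.card_eq_zero, Finset.filter_eq_empty_iff]
  intro p _
  simp only [Equiv.Perm.coe_one, id_eq]
  omega

lemma invCount_wordProd_le {L : List ℕ} (hL : ∀ i ∈ L, 1 ≤ i ∧ i + 1 ≤ n) :
    invCount n (wordProd L) ≤ L.length := by
  induction L with
  | nil => simp [wordProd, invCount_one]
  | cons a L ih =>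
    have hL' : ∀ i ∈ L, 1 ≤ i ∧ i + 1 ≤ n := fun i hi => hL i (List.mem_cons_of_mem a hi)
    rw [wordProd_cons, List.length_cons]
    exact (invCount_sw_mul_le (permOf_wordProd hL') (hL a List.mem_cons_self).1
      (hL a List.mem_cons_self).2).trans (by simpa using ih hL')

lemma exists_isWord_length_eq_invCount (hw : PermOf n w) :
    ∃ L, IsWord n L w ∧ L.length = invCount n w := by
  induction h : invCount n w generalizing w with
  | zero =>
    refine ⟨[], ⟨by simp, ?_⟩, rfl⟩
    by_contra hne
    obtain ⟨i, hi, hin, hdesc⟩ := hw.exists_descent (Ne.symm hne)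
    have := invCount_eq_sw_mul_add_one hw hi hin hdesc
    omega
  | succ k ih =>
    have hne : w ≠ 1 := by rintro rfl; simp [invCount_one] at h
    obtain ⟨i, hi, hin, hdesc⟩ := hw.exists_descent hne
    have hk := invCount_eq_sw_mul_add_one hw hi hin hdesc
    obtain ⟨L, ⟨hL, hprod⟩, hlen⟩ := ih (hw.sw_mul hi hin) (by omega)
    refine ⟨i :: L, ⟨?_, ?_⟩, by simp [hlen]⟩
    · exact List.forall_mem_cons.mpr ⟨⟨hi, hin⟩, hL⟩
    · rw [wordProd_cons, hprod, ← mul_assoc, sw_mul_self, one_mul]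

lemma len_eq_invCount (hw : PermOf n w) : len n w = invCount n w := by
  obtain ⟨L, hL, hlen⟩ := exists_isWord_length_eq_invCount hw
  refine le_antisymm (Nat.sInf_le ⟨L, hL, hlen⟩) (le_csInf ⟨_, L, hL, hlen⟩ ?_)
  rintro k ⟨L', ⟨hL', rfl⟩, rfl⟩
  exact invCount_wordProd_le hL'

lemma exists_isReduced_cons_iff (hw : PermOf n w) {i : ℕ} (hi : 1 ≤ i) (hin : i + 1 ≤ n) :
    (∃ L, IsReduced n (i :: L) w) ↔ w⁻¹ (i + 1) < w⁻¹ i := by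
  constructor
  · rintro ⟨L, ⟨hL, hprod⟩, hlen⟩
    have hLw : wordProd L = sw i * w := by
      rw [← hprod, wordProd_cons, ← mul_assoc, sw_mul_self, one_mul]
    have hshort := invCount_wordProd_le (n := n) fun x hx => hL x (List.mem_cons_of_mem i hx)
    rw [hLw] at hshort
    rw [len_eq_invCount hw, List.length_cons] at hlen
    by_contra! hle
    have := invCount_sw_mul_of_lt hw hi hin (w.apply_symm_apply i) (w.apply_symm_apply (i + 1))
      (hle.lt_of_ne fun he => by simpa using w⁻¹.injective he)
    omega
  · intro hdesc
    have hk := invCount_eq_sw_mul_add_one hw hi hin hdesc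
    obtain ⟨L, ⟨hL, hprod⟩, hlen⟩ := exists_isWord_length_eq_invCount (hw.sw_mul hi hin)
    refine ⟨L, ⟨?_, ?_⟩, ?_⟩
    · exact List.forall_mem_cons.mpr ⟨⟨hi, hin⟩, hL⟩
    · rw [wordProd_cons, hprod, ← mul_assoc, sw_mul_self, one_mul]
    · rw [len_eq_invCount hw, List.length_cons]
      omega

end invCount

section Tableau

variable {l n : ℕ} {lam : ℕ → ℕ → ℕ} {t : Node → ℕ}

lemma IsMP.row_antitone (hlam : IsMP l n lam) {m r r' : ℕ} (hr : 1 ≤ r) (hrr' : r ≤ r') :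
    lam m r' ≤ lam m r := by
  induction r', hrr' using Nat.le_induction with
  | base => exact le_rfl
  | succ k hk ih => exact (hlam.2.1 m k (by omega)).trans ih

lemma IsMP.bounds_of_inDiag (hlam : IsMP l n lam) {r c m : ℕ} (h : InDiag lam (r, c, m)) :
    1 ≤ r ∧ r ≤ n ∧ 1 ≤ m ∧ m ≤ l := by
  obtain ⟨hc, hcr⟩ := h
  dsimp only at hc hcr
  by_contra hout
  have := hlam.1 m r (by omega)
  omega

lemma IsMP.inDiag_of_le_of_le (hlam : IsMP l n lam) {r₁ c₁ r₂ c₂ m : ℕ}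
    (h : InDiag lam (r₂, c₂, m)) (hr : 1 ≤ r₁) (hrr : r₁ ≤ r₂) (hc : 1 ≤ c₁) (hcc : c₁ ≤ c₂) :
    InDiag lam (r₁, c₁, m) :=
  ⟨hc, hcc.trans (h.2.trans (hlam.row_antitone hr hrr))⟩

lemma IsStd.le_of_le_of_le (hlam : IsMP l n lam) (hstd : IsStd lam t) {r₁ c₁ r₂ c₂ m : ℕ}
    (h₁ : InDiag lam (r₁, c₁, m)) (h₂ : InDiag lam (r₂, c₂, m)) (hrr : r₁ ≤ r₂) (hcc : c₁ ≤ c₂) :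
    t (r₁, c₁, m) ≤ t (r₂, c₂, m) := by
  have hr := (hlam.bounds_of_inDiag h₁).1
  have hc : 1 ≤ c₁ := h₁.1
  have hrow : ∀ c, c₁ ≤ c → c ≤ c₂ → t (r₁, c₁, m) ≤ t (r₁, c, m) := by
    intro c hc'
    induction c, hc' using Nat.le_induction with
    | base => exact fun _ => le_rfl
    | succ c hc' ih =>
      exact fun hc₂ => (ih (by omega)).trans (hstd.1 r₁ c m
        (hlam.inDiag_of_le_of_le h₂ hr hrr (by omega) (by omega))
        (hlam.inDiag_of_le_of_le h₂ hr hrr (by omega) hc₂)).le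
  have hcol : ∀ r, r₁ ≤ r → r ≤ r₂ → t (r₁, c₂, m) ≤ t (r, c₂, m) := by
    intro r hr'
    induction r, hr' using Nat.le_induction with
    | base => exact fun _ => le_rfl
    | succ r hr' ih =>
      exact fun hr₂ => (ih (by omega)).trans (hstd.2 r c₂ m
        (hlam.inDiag_of_le_of_le h₂ (by omega) (by omega) (by omega) le_rfl)
        (hlam.inDiag_of_le_of_le h₂ (by omega) hr₂ (by omega) le_rfl)).le
  exact (hrow c₂ hcc le_rfl).trans (hcol r₂ hrr le_rfl)

lemma sum_colLen_le_compSize (p : ℕ → ℕ → ℕ) (m c : ℕ) :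
    ∑ c' ∈ Finset.Icc 1 c, colLen n p m c' ≤ compSize n p m := by
  simp only [colLen, compSize, Finset.card_filter]
  rw [Finset.sum_comm]
  gcongr with r
  rw [← Finset.card_filter]
  calc ({c' ∈ Finset.Icc 1 c | c' ≤ p m r} : Finset ℕ).card
      ≤ (Finset.Icc 1 (p m r)).card := Finset.card_le_card fun c' => by
        simp only [Finset.mem_filter, Finset.mem_Icc]; omega
    _ = p m r := by simp

lemma IsMP.le_colLen (hlam : IsMP l n lam) {r c m : ℕ} (h : InDiag lam (r, c, m)) :
    r ≤ colLen n lam m c := by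
  have hr := hlam.bounds_of_inDiag h
  calc r = (Finset.Icc 1 r).card := by simp
    _ ≤ colLen n lam m c := Finset.card_le_card fun r' hr' => by
      rw [Finset.mem_Icc] at hr'
      exact Finset.mem_filter.mpr
        ⟨Finset.mem_Icc.mpr ⟨hr'.1, by omega⟩, h.2.trans (hlam.row_antitone hr'.1 hr'.2)⟩

lemma IsMP.colTab_le (hlam : IsMP l n lam) {r c m : ℕ} (h : InDiag lam (r, c, m)) :
    colTab l n lam (r, c, m) ≤
      (∑ m' ∈ Finset.Icc (m + 1) l, compSize n lam m') +
        ∑ c' ∈ Finset.Icc 1 c, colLen n lam m c' := by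
  have hc : 1 ≤ c := h.1
  have hr := hlam.le_colLen h
  obtain ⟨c, rfl⟩ : ∃ c', c = c' + 1 := ⟨c - 1, by omega⟩
  rw [Finset.sum_Icc_succ_top (by omega), colTab]
  dsimp only
  rw [Nat.add_sub_cancel]
  omega

lemma IsMP.colTab_lt_of_comp_lt (hlam : IsMP l n lam) {r₁ c₁ m₁ r₂ c₂ m₂ : ℕ}
    (h₁ : InDiag lam (r₁, c₁, m₁)) (h₂ : InDiag lam (r₂, c₂, m₂)) (hm : m₂ < m₁) :
    colTab l n lam (r₁, c₁, m₁) < colTab l n lam (r₂, c₂, m₂) := by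
  have hb₁ := hlam.bounds_of_inDiag h₁
  have hb₂ := hlam.bounds_of_inDiag h₂
  have hsum : compSize n lam m₁ + ∑ m' ∈ Finset.Icc (m₁ + 1) l, compSize n lam m' ≤
      ∑ m' ∈ Finset.Icc (m₂ + 1) l, compSize n lam m' := by
    rw [← Finset.sum_insert (s := Finset.Icc (m₁ + 1) l) (by simp)]
    exact Finset.sum_le_sum_of_subset fun x hx => by
      simp only [Finset.mem_insert, Finset.mem_Icc] at hx ⊢
      omega
  have := hlam.colTab_le h₁
  have := sum_colLen_le_compSize (n := n) lam m₁ c₁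
  simp only [colTab] at *
  omega

lemma IsMP.colTab_lt_of_col_lt (hlam : IsMP l n lam) {r₁ c₁ r₂ c₂ m : ℕ}
    (h₁ : InDiag lam (r₁, c₁, m)) (h₂ : InDiag lam (r₂, c₂, m)) (hc : c₁ < c₂) :
    colTab l n lam (r₁, c₁, m) < colTab l n lam (r₂, c₂, m) := by
  have hr₂ := (hlam.bounds_of_inDiag h₂).1
  have hcols : ∑ c' ∈ Finset.Icc 1 c₁, colLen n lam m c' ≤
      ∑ c' ∈ Finset.Icc 1 (c₂ - 1), colLen n lam m c' :=
    Finset.sum_le_sum_of_subset (Finset.Icc_subset_Icc_right (by omega))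
  have := hlam.colTab_le h₁
  simp only [colTab] at *
  omega

end Tableau

/-- The relation `A ⇙ B` of the paper. -/
def Swarrow (A B : Node) : Prop :=
  (A.2.2 = B.2.2 ∧ A.1 < B.1 ∧ B.2.1 < A.2.1) ∨ A.2.2 < B.2.2

lemma swarrow_iff_colTab_lt {l n : ℕ} {lam : ℕ → ℕ → ℕ} {t : Node → ℕ} (hlam : IsMP l n lam)
    (hstd : IsStd lam t) {A B : Node} (hA : InDiag lam A) (hB : InDiag lam B) (hAB : t A < t B) :
    Swarrow A B ↔ colTab l n lam B < colTab l n lam A := by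
  obtain ⟨rA, cA, mA⟩ := A
  obtain ⟨rB, cB, mB⟩ := B
  simp only [Swarrow]
  constructor
  · rintro (⟨rfl, -, hc⟩ | hm)
    · exact hlam.colTab_lt_of_col_lt hB hA hc
    · exact hlam.colTab_lt_of_comp_lt hB hA hm
  intro hlt
  rcases lt_trichotomy mA mB with hm | rfl | hm
  · exact Or.inr hm
  · have hnot_le : ¬ rB ≤ rA ∨ ¬ cB ≤ cA := by
      by_contra! hle
      exact (hstd.le_of_le_of_le hlam hB hA hle.1 hle.2).not_gt hAB
    rcases lt_trichotomy cA cB with hc | rfl | hc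
    · exact absurd hlt (hlam.colTab_lt_of_col_lt hA hB hc).asymm
    · have hr : rA < rB := by omega
      simp only [colTab] at hlt
      omega
    · exact Or.inl ⟨rfl, by omega, hc⟩
  · exact absurd hlt (hlam.colTab_lt_of_comp_lt hA hB hm).asymm

theorem swarrow_iff_reduced_word_head_general (l n : ℕ)
    (lam : ℕ → ℕ → ℕ) (hlam : IsMP l n lam)
    (t : Node → ℕ) (ht : IsTab n lam t) (hstd : IsStd lam t)
    (j : ℕ) (hj1 : 2 ≤ j) (hj2 : j ≤ n)
    (wt : Equiv.Perm ℕ) (hwt : IsPermOfTab n lam (colTab l n lam) t wt) :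
    (∀ A B, InDiag lam A → t A = j - 1 → InDiag lam B → t B = j →
        ((A.2.2 = B.2.2 ∧ A.1 < B.1 ∧ B.2.1 < A.2.1) ∨ A.2.2 < B.2.2)) ↔
      ∃ L, IsReduced n ((j - 1) :: L) wt := by
  obtain ⟨hperm, hwt⟩ := hwt
  have hinv : ∀ A, InDiag lam A → wt⁻¹ (t A) = colTab l n lam A := fun A hA =>
    Equiv.Perm.inv_eq_iff_eq.mpr (hwt A hA).symm
  have key : ∀ A B, InDiag lam A → t A = j - 1 → InDiag lam B → t B = j →
      (Swarrow A B ↔ wt⁻¹ j < wt⁻¹ (j - 1)) := by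
    intro A B hA hjA hB hjB
    rw [← hjA, ← hjB, hinv A hA, hinv B hB]
    exact swarrow_iff_colTab_lt hlam hstd hA hB (by omega)
  obtain ⟨A, hA, hjA⟩ := ht.2.2 (j - 1) (by omega) (by omega)
  obtain ⟨B, hB, hjB⟩ := ht.2.2 j (by omega) hj2
  rw [exists_isReduced_cons_iff hperm (by omega) (by omega), Nat.sub_add_cancel (by omega)]
  exact ⟨fun h => (key A B hA hjA hB hjB).1 (h A B hA hjA hB hjB),
    fun h A' B' hA' hjA' hB' hjB' => (key A' B' hA' hjA' hB' hjB').2 h⟩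

/-- For a standard `λ`-tableau `t` and `2 ≤ j ≤ n`: `j-1 ⇙_t j`
(i.e. `j` is strictly lower and strictly to the left of `j-1` in the same component, or
`j-1` lies in a component of strictly smaller index than `j`) iff `w_t` has a reduced
expression beginning with `s_{j-1}`. -/
theorem swarrow_iff_reduced_word_head (l n : ℕ) (hl : 1 ≤ l) (hn : 1 ≤ n)
    (lam : ℕ → ℕ → ℕ) (hlam : IsMP l n lam)
    (t : Node → ℕ) (ht : IsTab n lam t) (hstd : IsStd lam t)
    (j : ℕ) (hj1 : 2 ≤ j) (hj2 : j ≤ n)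
    (wt : Equiv.Perm ℕ) (hwt : IsPermOfTab n lam (colTab l n lam) t wt) :
    (∀ A B, InDiag lam A → t A = j - 1 → InDiag lam B → t B = j →
        ((A.2.2 = B.2.2 ∧ A.1 < B.1 ∧ B.2.1 < A.2.1) ∨ A.2.2 < B.2.2)) ↔
      ∃ L, IsReduced n ((j - 1) :: L) wt :=
  swarrow_iff_reduced_word_head_general l n lam hlam t ht hstd j hj1 hj2 wt hwt

end FS
end

section
/- Let λ, μ ∈ 𝒫^l_n. Then Std_λ(μ) is non-empty if and only if λ ⊵ μ. -/
namespace FS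

open scoped Classical

/-! `leftCount l n p m c` counts the nodes of `[p]` weakly to the left of column `c` of
component `m`, and `t_p` fills exactly these nodes with `1, …, leftCount l n p m c`.
Hence a `λ`-column-dominated `μ`-tableau forces `leftCount λ ≤ leftCount μ`
everywhere, and conversely these inequalities make `t_μ` itself `λ`-column-dominated.
Finally `n - leftCount p m c = |p^(1)| + ⋯ + |p^(m-1)| + ∑_r (p^(m)_r - c)⁺`, and comparing
these quantities for all `c` is the same as comparing partial row sums, since for a
partition `a` one has `∑_r (a_r - c)⁺ = max_k (a_1 + ⋯ + a_k - k c)` and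
`a_1 + ⋯ + a_k = min_c (∑_r (a_r - c)⁺ + k c)`. -/

open Finset

section RowSums

variable {M : Type*} [AddCommMonoid M]

lemma sum_Icc_split_at (f : ℕ → M) {a m b : ℕ} (ha : 1 ≤ a) (ham : a ≤ m) (hmb : m ≤ b) :
    ∑ i ∈ Icc a b, f i = ∑ i ∈ Icc a (m - 1), f i + f m + ∑ i ∈ Icc (m + 1) b, f i := by
  obtain ⟨a, rfl⟩ : ∃ a', a = a' + 1 := ⟨a - 1, by omega⟩
  obtain ⟨m, rfl⟩ : ∃ m', m = m' + 1 := ⟨m - 1, by omega⟩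
  simp only [Icc_add_one_left_eq_Ioc, Nat.add_sub_cancel]
  rw [← sum_Ioc_consecutive f (show a ≤ m by omega) (show m ≤ b by omega),
    ← sum_Ioc_consecutive f (Nat.le_succ m) hmb, Nat.Ioc_succ_singleton, sum_singleton,
    add_assoc]

lemma sum_Icc_one_add_sum_Icc (f : ℕ → M) {r N : ℕ} (hrN : r ≤ N) :
    ∑ i ∈ Icc 1 r, f i + ∑ i ∈ Icc (r + 1) N, f i = ∑ i ∈ Icc 1 N, f i := by
  simpa only [← Icc_add_one_left_eq_Ioc, zero_add] using
    sum_Ioc_consecutive f (Nat.zero_le r) hrN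

lemma sum_Icc_tsub_add_eq (a : ℕ → ℕ) (r c : ℕ) :
    ∑ i ∈ Icc 1 r, (a i - c + c) = ∑ i ∈ Icc 1 r, (a i - c) + c * r := by
  rw [sum_add_distrib, sum_const, Nat.card_Icc, Nat.add_sub_cancel, smul_eq_mul, mul_comm]

variable {a : ℕ → ℕ} {N r : ℕ}

lemma sum_Icc_le_sum_tsub_add (hrN : r ≤ N) (c : ℕ) :
    ∑ i ∈ Icc 1 r, a i ≤ ∑ i ∈ Icc 1 N, (a i - c) + c * r :=
  calc ∑ i ∈ Icc 1 r, a i ≤ ∑ i ∈ Icc 1 r, (a i - c + c) :=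
        sum_le_sum fun _ _ => le_tsub_add
    _ = ∑ i ∈ Icc 1 r, (a i - c) + c * r := sum_Icc_tsub_add_eq a r c
    _ ≤ ∑ i ∈ Icc 1 N, (a i - c) + c * r :=
        Nat.add_le_add_right (sum_le_sum_of_subset (Icc_subset_Icc_right hrN)) _

lemma sum_Icc_eq_sum_tsub_add {c : ℕ} (hrN : r ≤ N) (hge : ∀ i ∈ Icc 1 r, c ≤ a i)
    (hle : ∀ i ∈ Icc (r + 1) N, a i ≤ c) :
    ∑ i ∈ Icc 1 r, a i = ∑ i ∈ Icc 1 N, (a i - c) + c * r := by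
  have htail : ∑ i ∈ Icc (r + 1) N, (a i - c) = 0 :=
    sum_eq_zero fun i hi => Nat.sub_eq_zero_of_le (hle i hi)
  rw [← sum_Icc_one_add_sum_Icc _ hrN, htail, add_zero, ← sum_Icc_tsub_add_eq]
  exact sum_congr rfl fun i hi => (Nat.sub_add_cancel (hge i hi)).symm

lemma AntitoneOn.exists_threshold (ha : AntitoneOn a (Set.Ici 1)) (c N : ℕ) :
    ∃ r ≤ N, (∀ i ∈ Icc 1 r, c ≤ a i) ∧ ∀ i ∈ Icc (r + 1) N, a i ≤ c := by
  induction N with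
  | zero => exact ⟨0, le_rfl, by simp, by simp⟩
  | succ N ih =>
    obtain ⟨r, hrN, hge, hle⟩ := ih
    by_cases hext : r = N ∧ c ≤ a (N + 1)
    · refine ⟨N + 1, le_rfl, fun i hi => ?_, by simp⟩
      rcases (mem_Icc.1 hi).2.eq_or_lt with rfl | hlt
      · exact hext.2
      · exact hge i (by rw [mem_Icc] at hi ⊢; omega)
    · refine ⟨r, by omega, hge, fun i hi => ?_⟩
      rw [mem_Icc] at hi
      rcases hi.2.eq_or_lt with rfl | hlt
      · by_cases hrN' : r = N
        · exact (not_le.1 fun h => hext ⟨hrN', h⟩).le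
        · exact (ha (show 1 ≤ N by omega) (show 1 ≤ N + 1 by omega) (Nat.le_succ N)).trans
            (hle N (by rw [mem_Icc]; omega))
      · exact hle i (by rw [mem_Icc]; omega)

lemma sum_Icc_eq_sum_Icc_min (ha : ∀ i, N < i → a i = 0) (r : ℕ) :
    ∑ i ∈ Icc 1 r, a i = ∑ i ∈ Icc 1 (min r N), a i := by
  refine (sum_subset (Icc_subset_Icc_right (min_le_left r N)) fun i hi hi' => ha i ?_).symm
  rw [mem_Icc] at hi hi'
  omega

end RowSums

section Multipartitions

variable {l n : ℕ} {p : ℕ → ℕ → ℕ}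

lemma IsMP.antitoneOn (hp : IsMP l n p) (m : ℕ) : AntitoneOn (p m) (Set.Ici 1) :=
  antitoneOn_nat_Ici_of_succ_le fun r hr => hp.2.1 m r hr

lemma IsMP.eq_zero_of_lt (hp : IsMP l n p) (m r : ℕ) (hr : n < r) : p m r = 0 :=
  hp.1 m r (by omega)

lemma IsMP.part_le (hp : IsMP l n p) (m r : ℕ) : p m r ≤ n := by
  by_cases hmr : m ∈ Icc 1 l ∧ r ∈ Icc 1 n
  · calc p m r ≤ ∑ r' ∈ Icc 1 n, p m r' := single_le_sum (fun _ _ => Nat.zero_le _) hmr.2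
      _ ≤ ∑ m' ∈ Icc 1 l, ∑ r' ∈ Icc 1 n, p m' r' :=
          single_le_sum (f := fun m' => ∑ r' ∈ Icc 1 n, p m' r') (fun _ _ => Nat.zero_le _) hmr.1
      _ = n := hp.2.2
  · rw [mem_Icc, mem_Icc] at hmr
    rw [hp.1 m r (by omega)]
    exact Nat.zero_le n

lemma IsMP.bounds_of_inDiag_s13 (hp : IsMP l n p) {A : Node} (hA : InDiag p A) :
    (1 ≤ A.1 ∧ A.1 ≤ n) ∧ (1 ≤ A.2.1 ∧ A.2.1 ≤ n) ∧ (1 ≤ A.2.2 ∧ A.2.2 ≤ l) := by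
  obtain ⟨hc1, hc2⟩ := hA
  have hin := mt (hp.1 A.2.2 A.1) (by omega)
  have := hp.part_le A.2.2 A.1
  omega

lemma IsMP.sum_compSize (hp : IsMP l n p) {m : ℕ} (hm1 : 1 ≤ m) (hml : m ≤ l) :
    ∑ m' ∈ Icc 1 (m - 1), compSize n p m' + compSize n p m +
      ∑ m' ∈ Icc (m + 1) l, compSize n p m' = n := by
  rw [← sum_Icc_split_at _ le_rfl hm1 hml]
  exact hp.2.2

end Multipartitions

section Dominance

variable {l n : ℕ}

def rightCount (n : ℕ) (p : ℕ → ℕ → ℕ) (m c : ℕ) : ℕ :=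
  ∑ m' ∈ Icc 1 (m - 1), compSize n p m' + ∑ r ∈ Icc 1 n, (p m r - c)

theorem dom_iff_rightCount_le {lam mu : ℕ → ℕ → ℕ} (hlam : IsMP l n lam) (hmu : IsMP l n mu) :
    Dom l n lam mu ↔
      ∀ m c, 1 ≤ m → m ≤ l → rightCount n mu m c ≤ rightCount n lam m c := by
  constructor
  · intro hdom m c hm1 hml
    obtain ⟨r, hrn, hge, hle⟩ := AntitoneOn.exists_threshold (hmu.antitoneOn m) c n
    have hmu_eq := sum_Icc_eq_sum_tsub_add hrn hge hle
    have hlam_le := sum_Icc_le_sum_tsub_add (a := lam m) hrn c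
    have := hdom m r hm1 hml
    unfold rightCount
    linarith
  · intro hV m r hm1 hml
    rw [sum_Icc_eq_sum_Icc_min (hlam.eq_zero_of_lt m) r,
      sum_Icc_eq_sum_Icc_min (hmu.eq_zero_of_lt m) r]
    set r' := min r n
    have hr'n : r' ≤ n := min_le_right r n
    -- `λ^(m)` crosses the level `c` at row `r'`, so the bound `sum_Icc_le_sum_tsub_add` is sharp
    set c := lam m (max r' 1)
    have hlam_eq : ∑ i ∈ Icc 1 r', lam m i = ∑ i ∈ Icc 1 n, (lam m i - c) + c * r' := by
      refine sum_Icc_eq_sum_tsub_add hr'n (fun i hi => ?_) fun i hi => ?_ <;>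
        rw [mem_Icc] at hi <;>
        exact hlam.antitoneOn m (Set.mem_Ici.2 (by omega)) (Set.mem_Ici.2 (by omega)) (by omega)
    have hmu_le := sum_Icc_le_sum_tsub_add (a := mu m) hr'n c
    have := hV m c hm1 hml
    unfold rightCount at this
    linarith

end Dominance

section Columns

variable {l n : ℕ} {p : ℕ → ℕ → ℕ}

def leftCount (l n : ℕ) (p : ℕ → ℕ → ℕ) (m c : ℕ) : ℕ :=
  ∑ m' ∈ Icc (m + 1) l, compSize n p m' + ∑ c' ∈ Icc 1 c, colLen n p m c'

lemma card_filter_Icc_le (k N : ℕ) : ((Icc 1 N).filter (· ≤ k)).card = min k N := by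
  have : (Icc 1 N).filter (· ≤ k) = Icc 1 (min k N) := by
    ext x
    simp only [mem_filter, mem_Icc]
    omega
  rw [this, Nat.card_Icc, Nat.add_sub_cancel]

lemma sum_colLen_eq_sum_min (m c : ℕ) :
    ∑ c' ∈ Icc 1 c, colLen n p m c' = ∑ r ∈ Icc 1 n, min (p m r) c := by
  simp only [colLen, card_filter]
  rw [sum_comm]
  refine sum_congr rfl fun r _ => ?_
  rw [← card_filter, card_filter_Icc_le]

lemma leftCount_add_rightCount (hp : IsMP l n p) {m : ℕ} (hm1 : 1 ≤ m) (hml : m ≤ l) (c : ℕ) :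
    leftCount l n p m c + rightCount n p m c = n := by
  have hrow : ∑ c' ∈ Icc 1 c, colLen n p m c' + ∑ r ∈ Icc 1 n, (p m r - c) = compSize n p m := by
    rw [sum_colLen_eq_sum_min, ← sum_add_distrib]
    exact sum_congr rfl fun r _ => by omega
  have := hp.sum_compSize hm1 hml
  unfold leftCount rightCount
  omega

lemma leftCount_le (hp : IsMP l n p) {m : ℕ} (hm1 : 1 ≤ m) (hml : m ≤ l) (c : ℕ) :
    leftCount l n p m c ≤ n :=
  Nat.le.intro (leftCount_add_rightCount hp hm1 hml c)

theorem dom_iff_leftCount_le {lam mu : ℕ → ℕ → ℕ} (hlam : IsMP l n lam) (hmu : IsMP l n mu) :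
    Dom l n lam mu ↔
      ∀ m c, 1 ≤ m → m ≤ l → leftCount l n lam m c ≤ leftCount l n mu m c := by
  rw [dom_iff_rightCount_le hlam hmu]
  refine forall₄_congr fun m c hm1 hml => ?_
  have := leftCount_add_rightCount hlam hm1 hml c
  have := leftCount_add_rightCount hmu hm1 hml c
  omega

lemma leftCount_le_leftCount {m m' c c' : ℕ} (hm' : m' ≤ l) (h : m < m' ∨ m' = m ∧ c' ≤ c) :
    leftCount l n p m' c' ≤ leftCount l n p m c := by
  rcases h with hlt | ⟨rfl, hc⟩
  · have hcol : ∑ c'' ∈ Icc 1 c', colLen n p m' c'' ≤ compSize n p m' := by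
      rw [sum_colLen_eq_sum_min]
      exact sum_le_sum fun r _ => min_le_left _ _
    have hsplit := sum_Icc_split_at (compSize n p) (show 1 ≤ m + 1 by omega) hlt hm'
    unfold leftCount
    omega
  · exact Nat.add_le_add_left (sum_le_sum_of_subset (Icc_subset_Icc_right hc)) _

end Columns

section ColumnTableau

variable {l n : ℕ} {p : ℕ → ℕ → ℕ}

lemma colTab_eq (A : Node) : colTab l n p A = leftCount l n p A.2.2 (A.2.1 - 1) + A.1 := rfl

lemma WeaklyLeft.trans {A B C : Node} (hAB : WeaklyLeft A B) (hBC : WeaklyLeft B C) :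
    WeaklyLeft A C := by
  unfold WeaklyLeft at *
  omega

lemma row_le_colLen (hp : IsMP l n p) {A : Node} (hA : InDiag p A) :
    A.1 ≤ colLen n p A.2.2 A.2.1 := by
  have hrn := (hp.bounds_of_inDiag_s13 hA).1.2
  have hsub : Icc 1 A.1 ⊆ (Icc 1 n).filter fun r => A.2.1 ≤ p A.2.2 r := fun r hr => by
    rw [mem_Icc] at hr
    exact mem_filter.2 ⟨mem_Icc.2 ⟨hr.1, hr.2.trans hrn⟩,
      hA.2.trans (hp.antitoneOn A.2.2 (Set.mem_Ici.2 hr.1) (Set.mem_Ici.2 (hr.1.trans hr.2)) hr.2)⟩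
  simpa [colLen] using card_le_card hsub

lemma colTab_le_leftCount (hp : IsMP l n p) {A : Node} (hA : InDiag p A) :
    colTab l n p A ≤ leftCount l n p A.2.2 A.2.1 := by
  have hsplit : leftCount l n p A.2.2 A.2.1 =
      leftCount l n p A.2.2 (A.2.1 - 1) + colLen n p A.2.2 A.2.1 := by
    obtain ⟨c, hc⟩ : ∃ c, A.2.1 = c + 1 := ⟨A.2.1 - 1, by have := hA.1; omega⟩
    simp only [leftCount, hc, Nat.add_sub_cancel, sum_Icc_succ_top (Nat.le_add_left 1 c)]
    ring
  rw [colTab_eq, hsplit]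
  exact Nat.add_le_add_left (row_le_colLen hp hA) _

theorem colTab_le_leftCount_iff (hp : IsMP l n p) {A B : Node} (hA : InDiag p A)
    (hB : B.2.2 ≤ l) : colTab l n p A ≤ leftCount l n p B.2.2 B.2.1 ↔ WeaklyLeft A B := by
  have hAb := hp.bounds_of_inDiag_s13 hA
  refine ⟨fun h => ?_, fun h => (colTab_le_leftCount hp hA).trans
    (leftCount_le_leftCount hAb.2.2.2 h)⟩
  by_contra hAB
  unfold WeaklyLeft at hAB
  have : leftCount l n p B.2.2 B.2.1 ≤ leftCount l n p A.2.2 (A.2.1 - 1) :=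
    leftCount_le_leftCount hB (by omega)
  rw [colTab_eq] at h
  omega

lemma colTab_injOn (hp : IsMP l n p) : Set.InjOn (colTab l n p) {A | InDiag p A} := by
  intro A hA B hB h
  have hAB : WeaklyLeft A B := (colTab_le_leftCount_iff hp hA (hp.bounds_of_inDiag_s13 hB).2.2.2).1
    (h ▸ colTab_le_leftCount hp hB)
  have hBA : WeaklyLeft B A := (colTab_le_leftCount_iff hp hB (hp.bounds_of_inDiag_s13 hA).2.2.2).1
    (h ▸ colTab_le_leftCount hp hA)
  unfold WeaklyLeft at hAB hBA
  have hm : A.2.2 = B.2.2 := by omega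
  have hc : A.2.1 = B.2.1 := by omega
  rw [colTab_eq, colTab_eq, hm, hc] at h
  exact Prod.ext (by omega) (Prod.ext hc hm)

lemma colTab_mem_Icc (hp : IsMP l n p) {A : Node} (hA : InDiag p A) :
    colTab l n p A ∈ Icc 1 n := by
  obtain ⟨⟨hr1, -⟩, -, hm1, hml⟩ := hp.bounds_of_inDiag_s13 hA
  refine mem_Icc.2 ⟨?_, (colTab_le_leftCount hp hA).trans (leftCount_le hp hm1 hml _)⟩
  rw [colTab_eq]
  omega

noncomputable def diagram (l n : ℕ) (p : ℕ → ℕ → ℕ) : Finset Node :=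
  (Icc 1 n ×ˢ Icc 1 n ×ˢ Icc 1 l).filter (InDiag p)

lemma mem_diagram (hp : IsMP l n p) {A : Node} : A ∈ diagram l n p ↔ InDiag p A := by
  refine ⟨fun h => (mem_filter.1 h).2, fun h => mem_filter.2 ⟨?_, h⟩⟩
  simpa only [mem_product, mem_Icc] using hp.bounds_of_inDiag_s13 h

lemma card_diagram (hp : IsMP l n p) : (diagram l n p).card = n :=
  calc (diagram l n p).card
      = ∑ r ∈ Icc 1 n, ∑ m ∈ Icc 1 l, ∑ c ∈ Icc 1 n, if InDiag p (r, c, m) then 1 else 0 := by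
        rw [diagram, card_filter]
        simp only [sum_product]
        exact sum_congr rfl fun r _ => sum_comm
    _ = ∑ r ∈ Icc 1 n, ∑ m ∈ Icc 1 l, p m r := by
        refine sum_congr rfl fun r _ => sum_congr rfl fun m _ => ?_
        rw [← card_filter, ← min_eq_left (hp.part_le m r), ← card_filter_Icc_le]
        exact congrArg card (filter_congr fun c hc => by simp [InDiag, (mem_Icc.1 hc).1])
    _ = n := by rw [sum_comm]; exact hp.2.2

lemma isTab_colTab (hp : IsMP l n p) : IsTab n p (colTab l n p) := by
  have hmaps : Set.MapsTo (colTab l n p) (diagram l n p) (Icc 1 n) :=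
    fun A hA => colTab_mem_Icc hp ((mem_diagram hp).1 hA)
  have hsurj : Set.SurjOn (colTab l n p) (diagram l n p) (Icc 1 n) :=
    surjOn_of_injOn_of_card_le _ hmaps ((colTab_injOn hp).mono fun A hA => (mem_diagram hp).1 hA)
      (by rw [card_diagram hp, Nat.card_Icc, Nat.add_sub_cancel])
  refine ⟨fun A hA => mem_Icc.1 (colTab_mem_Icc hp hA), fun A B hA hB h => colTab_injOn hp hA hB h,
    fun i h1 h2 => ?_⟩
  obtain ⟨A, hA, hAi⟩ := hsurj (mem_Icc.2 ⟨h1, h2⟩)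
  exact ⟨A, (mem_diagram hp).1 hA, hAi⟩

lemma isStd_colTab (hp : IsMP l n p) : IsStd p (colTab l n p) := by
  refine ⟨fun r c m hA hB => ?_, fun r c m _ _ => by simp only [colTab]; omega⟩
  have hr := (hp.bounds_of_inDiag_s13 hA).1.1
  calc colTab l n p (r, c, m) ≤ leftCount l n p m c := colTab_le_leftCount hp hA
    _ < leftCount l n p m (c + 1 - 1) + r := by rw [Nat.add_sub_cancel]; omega

end ColumnTableau

section ColumnDominance

variable {l n : ℕ} {lam mu : ℕ → ℕ → ℕ}

lemma leftCount_le_of_colDomOn (hlam : IsMP l n lam) (hmu : IsMP l n mu) {t : Node → ℕ}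
    (ht : IsTab n mu t) (hdom : ColDomOn l n lam mu t n) {m : ℕ} (hm1 : 1 ≤ m) (hml : m ≤ l)
    (c : ℕ) : leftCount l n lam m c ≤ leftCount l n mu m c := by
  set R := (diagram l n mu).filter fun A => WeaklyLeft A (0, c, m)
  -- `t⁻¹(i)` lies weakly left of `t_λ⁻¹(i)`, which for `i ≤ leftCount λ m c` lies in `R`
  have hsub : Icc 1 (leftCount l n lam m c) ⊆ R.image t := by
    intro i hi
    rw [mem_Icc] at hi
    have hin : i ≤ n := hi.2.trans (leftCount_le hlam hm1 hml c)
    obtain ⟨B, hB, hBi⟩ := (isTab_colTab hlam).2.2 i hi.1 hin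
    obtain ⟨A, hA, hAi⟩ := ht.2.2 i hi.1 hin
    have hBR : WeaklyLeft B (0, c, m) := (colTab_le_leftCount_iff hlam hB hml).1 (hBi ▸ hi.2)
    have hAB : WeaklyLeft A B := hdom i A B hi.1 hin hA hAi hB hBi
    exact mem_image.2 ⟨A, mem_filter.2 ⟨(mem_diagram hmu).2 hA, hAB.trans hBR⟩, hAi⟩
  have hR : R.card ≤ leftCount l n mu m c := by
    have hmaps : Set.MapsTo (colTab l n mu) R (Icc 1 (leftCount l n mu m c)) := fun A hA => by
      obtain ⟨hAd, hAR⟩ := mem_filter.1 hA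
      have hAd := (mem_diagram hmu).1 hAd
      exact mem_Icc.2 ⟨(mem_Icc.1 (colTab_mem_Icc hmu hAd)).1,
        (colTab_le_leftCount_iff hmu hAd hml).2 hAR⟩
    simpa using card_le_card_of_injOn _ hmaps
      ((colTab_injOn hmu).mono fun A hA => (mem_diagram hmu).1 (mem_filter.1 hA).1)
  calc leftCount l n lam m c = (Icc 1 (leftCount l n lam m c)).card := by simp
    _ ≤ (R.image t).card := card_le_card hsub
    _ ≤ R.card := card_image_le
    _ ≤ leftCount l n mu m c := hR

lemma colDomOn_colTab (hlam : IsMP l n lam) (hmu : IsMP l n mu)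
    (h : ∀ m c, 1 ≤ m → m ≤ l → leftCount l n lam m c ≤ leftCount l n mu m c) (j : ℕ) :
    ColDomOn l n lam mu (colTab l n mu) j := by
  intro i A B _ _ hA hAi hB hBi
  obtain ⟨-, -, hB1, hBl⟩ := hlam.bounds_of_inDiag_s13 hB
  refine (colTab_le_leftCount_iff hmu hA hBl).1 ?_
  calc colTab l n mu A = colTab l n lam B := hAi.trans hBi.symm
    _ ≤ leftCount l n lam B.2.2 B.2.1 := colTab_le_leftCount hlam hB
    _ ≤ leftCount l n mu B.2.2 B.2.1 := h _ _ hB1 hBl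

end ColumnDominance

theorem stdColDom_nonempty_iff_dom_general (l n : ℕ)
    (lam mu : ℕ → ℕ → ℕ) (hlam : IsMP l n lam) (hmu : IsMP l n mu) :
    (∃ t : Node → ℕ, IsTab n mu t ∧ IsStd mu t ∧ ColDomOn l n lam mu t n) ↔
      Dom l n lam mu := by
  rw [dom_iff_leftCount_le hlam hmu]
  constructor
  · rintro ⟨t, ht, -, hdom⟩ m c hm1 hml
    exact leftCount_le_of_colDomOn hlam hmu ht hdom hm1 hml c
  · intro h
    exact ⟨colTab l n mu, isTab_colTab hmu, isStd_colTab hmu, colDomOn_colTab hlam hmu h n⟩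

/-- `Std_λ(μ)` is non-empty iff `λ ⊵ μ`. -/
theorem stdColDom_nonempty_iff_dom (l n : ℕ) (hl : 1 ≤ l) (hn : 1 ≤ n)
    (lam mu : ℕ → ℕ → ℕ) (hlam : IsMP l n lam) (hmu : IsMP l n mu) :
    (∃ t : Node → ℕ, IsTab n mu t ∧ IsStd mu t ∧ ColDomOn l n lam mu t n) ↔
      Dom l n lam mu :=
  stdColDom_nonempty_iff_dom_general l n lam mu hlam hmu

end FS
end
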